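/- arXiv:2010.11990 — 8 statements merged into one kernel-verified Lean document; each statement's English description precedes it below -/
import Mathlib

section
/- For every pair (τ, v) ∈ ℝ × V, the vector (τ, v) is null for g (i.e., g((τ,v),(τ,v)) = 0) if and only if one of the following holds: (i) τ > 0 and τ = F(v); (ii) τ < 0 and −τ = F(−v); (iii) τ = 0 and v = 0. In particular, the null cone of the Lorentzian scalar product g coincides exactly with the cone determined by the Randers norm F with Zermelo data (h, W). -/
/-!
The quadratic form of `g` at `(τ, v)` is `Λ τ² + 2 h(v,W) τ − h(v,v)`. For `v ≠ 0` its
discriminant exceeds `h(v,W)²`, so it has one positive root `F v` and one negative root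
`−F(−v)`; for `v = 0` it is `Λ τ²`, which vanishes only at `τ = 0`.
-/

namespace Randers

variable {Λ a b τ : ℝ}

lemma quadratic_eq_mul_sub_root_mul_sub_root {s : ℝ} (hΛ : Λ ≠ 0) (hs : s ^ 2 = b ^ 2 + Λ * a) :
    Λ * τ ^ 2 + 2 * b * τ - a = Λ * (τ - (-b + s) / Λ) * (τ + (b + s) / Λ) := by
  field_simp
  linear_combination hs

lemma quadratic_eq_zero_iff (hΛ : 0 < Λ) (ha : 0 < a) :
    Λ * τ ^ 2 + 2 * b * τ - a = 0 ↔
      (0 < τ ∧ τ = (-b + √(b ^ 2 + Λ * a)) / Λ) ∨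
        (τ < 0 ∧ -τ = (b + √(b ^ 2 + Λ * a)) / Λ) := by
  set s := √(b ^ 2 + Λ * a)
  have hs : s ^ 2 = b ^ 2 + Λ * a := Real.sq_sqrt (by positivity)
  -- so the two roots have opposite signs
  have hbs : |b| < s := by
    rw [← Real.sqrt_sq_eq_abs]
    exact Real.sqrt_lt_sqrt (sq_nonneg b) (by linarith [mul_pos hΛ ha])
  have hpos : 0 < (-b + s) / Λ := div_pos (by linarith [le_abs_self b]) hΛ
  have hneg : 0 < (b + s) / Λ := div_pos (by linarith [neg_abs_le b]) hΛ
  rw [quadratic_eq_mul_sub_root_mul_sub_root hΛ.ne' hs, mul_assoc, mul_eq_zero, mul_eq_zero,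
    sub_eq_zero, add_eq_zero_iff_eq_neg]
  constructor
  · rintro (hΛ0 | rfl | rfl)
    · exact absurd hΛ0 hΛ.ne'
    · exact Or.inl ⟨hpos, rfl⟩
    · exact Or.inr ⟨neg_lt_zero.mpr hneg, neg_neg _⟩
  · rintro (⟨-, rfl⟩ | ⟨-, hτ⟩)
    · exact Or.inr (Or.inl rfl)
    · exact Or.inr (Or.inr (neg_eq_iff_eq_neg.mp hτ))

end Randers

theorem stmt_0_general {V : Type*} [AddCommGroup V] [Module ℝ V]
    (h : V →ₗ[ℝ] V →ₗ[ℝ] ℝ)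
    (hposdef : ∀ x : V, x ≠ 0 → 0 < h x x)
    (W : V) (hW : h W W < 1)
    (Λ : ℝ) (hΛ : Λ = 1 - h W W)
    (F : V → ℝ)
    (hF : ∀ v : V, F v = (-(h v W) + Real.sqrt ((h v W) ^ 2 + Λ * h v v)) / Λ)
    (g : ℝ × V → ℝ × V → ℝ)
    (hg : ∀ (τ σ : ℝ) (v u : V),
      g (τ, v) (σ, u) = Λ * (τ * σ) + τ * h u W + σ * h v W - h v u) :
    ∀ (τ : ℝ) (v : V),
      g (τ, v) (τ, v) = 0 ↔
        (0 < τ ∧ τ = F v) ∨ (τ < 0 ∧ -τ = F (-v)) ∨ (τ = 0 ∧ v = 0) := by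
  intro τ v
  have hΛpos : 0 < Λ := by
    have hWW : 0 ≤ h W W := by
      rcases eq_or_ne W 0 with rfl | hW0
      · simp
      · exact (hposdef W hW0).le
    linarith
  have hgτv : g (τ, v) (τ, v) = Λ * τ ^ 2 + 2 * h v W * τ - h v v := by rw [hg]; ring
  rcases eq_or_ne v 0 with rfl | hv
  · have hF0 : F 0 = 0 := by simp [hF]
    simp only [hgτv, hF0, neg_zero, map_zero, LinearMap.zero_apply, and_true]
    simp [hΛpos.ne']
    grind
  · simp only [hgτv, Randers.quadratic_eq_zero_iff hΛpos (hposdef v hv), hF, map_neg,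
      LinearMap.neg_apply, neg_neg, neg_sq, hv, and_false, or_false]

/-- For the Lorentz metric `g = Λ dt² − 2ω dt − h` associated with Zermelo
data `(h, W)` with `h(W,W) < 1`, a vector `(τ, v)` is `g`-null iff `τ > 0 ∧ τ = F v`, or
`τ < 0 ∧ −τ = F(−v)`, or `τ = 0 ∧ v = 0`, where `F` is the Randers norm with Zermelo
data `(h, W)`. -/
theorem stmt_0 {V : Type*} [AddCommGroup V] [Module ℝ V] [FiniteDimensional ℝ V]
    (h : V →ₗ[ℝ] V →ₗ[ℝ] ℝ)
    (hsymm : ∀ x y : V, h x y = h y x)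
    (hposdef : ∀ x : V, x ≠ 0 → 0 < h x x)
    (W : V) (hW : h W W < 1)
    (Λ : ℝ) (hΛ : Λ = 1 - h W W)
    (F : V → ℝ)
    (hF : ∀ v : V, F v = (-(h v W) + Real.sqrt ((h v W) ^ 2 + Λ * h v v)) / Λ)
    (g : ℝ × V → ℝ × V → ℝ)
    (hg : ∀ (τ σ : ℝ) (v u : V),
      g (τ, v) (σ, u) = Λ * (τ * σ) + τ * h u W + σ * h v W - h v u) :
    ∀ (τ : ℝ) (v : V),
      g (τ, v) (τ, v) = 0 ↔
        (0 < τ ∧ τ = F v) ∨ (τ < 0 ∧ -τ = F (-v)) ∨ (τ = 0 ∧ v = 0) :=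
  stmt_0_general h hposdef W hW Λ hΛ F hF g hg
end

section
/- The symmetric bilinear form g on ℝ × V is nondegenerate of Lorentzian signature (1, n), where n = dim V: g((1,0),(1,0)) = Λ > 0, g is negative definite on the n-dimensional subspace {0} × V, and every subspace of ℝ × V on which g is negative definite has dimension at most n. -/
/-!
Shearing the time direction by `W`, i.e. `(τ, v) ↦ (τ, v - τ • W)`, turns `g` into the Minkowski
form `τ σ - h(v, u)`: completing the square gives
`g((τ,v),(σ,u)) = τ σ - h(v - τ W, u - σ W)`.
Hence `g(x, (1, W))` is the time coordinate of `x`, which together with the negative definiteness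
on `{0} × V` gives nondegeneracy, and the timelike vector `(1, W)` with `g((1,W),(1,W)) = 1`
cannot lie in a negative definite subspace, which is therefore proper.
-/

open Module

theorem Submodule.finrank_lt_of_forall_neg {M : Type*} [AddCommGroup M] [Module ℝ M]
    [FiniteDimensional ℝ M] (q : M → ℝ) {S : Submodule ℝ M} (hS : ∀ x ∈ S, x ≠ 0 → q x < 0)
    {x : M} (hx₀ : x ≠ 0) (hx : 0 ≤ q x) : finrank ℝ S < finrank ℝ M := by
  have hxS : x ∉ S := fun hmem => (hS x hmem hx₀).not_ge hx
  refine Submodule.finrank_lt fun htop => hxS ?_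
  simp [htop]

section ShearedMinkowski

variable {V : Type*} [AddCommGroup V] [Module ℝ V] (h : V →ₗ[ℝ] V →ₗ[ℝ] ℝ) (W : V)

def shearedMinkowski (x y : ℝ × V) : ℝ :=
  x.1 * y.1 - h (x.2 - x.1 • W) (y.2 - y.1 • W)

variable {h W}

theorem shearedMinkowski_apply (hsymm : ∀ x y : V, h x y = h y x) (τ σ : ℝ) (v u : V) :
    shearedMinkowski h W (τ, v) (σ, u)
      = (1 - h W W) * (τ * σ) + τ * h u W + σ * h v W - h v u := by
  simp only [shearedMinkowski, map_sub, map_smul, LinearMap.sub_apply, LinearMap.smul_apply,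
    smul_eq_mul, hsymm W u]
  ring

@[simp]
theorem shearedMinkowski_apply_one_W (x : ℝ × V) : shearedMinkowski h W x (1, W) = x.1 := by
  simp [shearedMinkowski]

@[simp]
theorem shearedMinkowski_zero_zero (v u : V) :
    shearedMinkowski h W (0, v) (0, u) = -h v u := by
  simp [shearedMinkowski]

theorem shearedMinkowski_nondegenerate (hposdef : ∀ x : V, x ≠ 0 → 0 < h x x) (x : ℝ × V)
    (hx : ∀ y, shearedMinkowski h W x y = 0) : x = 0 := by
  obtain ⟨τ, v⟩ := x
  obtain rfl : τ = 0 := by simpa using hx (1, W)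
  obtain rfl : v = 0 := by
    by_contra hv
    have := hx (0, v)
    rw [shearedMinkowski_zero_zero] at this
    linarith [hposdef v hv]
  rfl

end ShearedMinkowski

/-- The symmetric bilinear form `g = Λ dt² − 2ω dt − h` on `ℝ × V` is
nondegenerate of Lorentzian signature `(1, n)`, `n = dim V`: `g((1,0),(1,0)) = Λ > 0`,
`g` is negative definite on `{0} × V`, and any subspace on which `g` is negative
definite has dimension at most `n`. -/
theorem stmt_1 {V : Type*} [AddCommGroup V] [Module ℝ V] [FiniteDimensional ℝ V]
    (h : V →ₗ[ℝ] V →ₗ[ℝ] ℝ)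
    (hsymm : ∀ x y : V, h x y = h y x)
    (hposdef : ∀ x : V, x ≠ 0 → 0 < h x x)
    (W : V) (hW : h W W < 1)
    (Λ : ℝ) (hΛ : Λ = 1 - h W W)
    (g : ℝ × V → ℝ × V → ℝ)
    (hg : ∀ (τ σ : ℝ) (v u : V),
      g (τ, v) (σ, u) = Λ * (τ * σ) + τ * h u W + σ * h v W - h v u) :
    (g ((1 : ℝ), (0 : V)) ((1 : ℝ), (0 : V)) = Λ ∧ 0 < Λ) ∧
    (∀ x : ℝ × V, (∀ y : ℝ × V, g x y = 0) → x = 0) ∧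
    (∀ v : V, v ≠ 0 → g ((0 : ℝ), v) ((0 : ℝ), v) < 0) ∧
    (∀ S : Submodule ℝ (ℝ × V), (∀ x ∈ S, x ≠ 0 → g x x < 0) →
      Module.finrank ℝ S ≤ Module.finrank ℝ V) := by
  subst hΛ
  obtain rfl : g = shearedMinkowski h W := by
    funext ⟨τ, v⟩ ⟨σ, u⟩
    rw [hg, shearedMinkowski_apply hsymm]
  refine ⟨⟨by simp [shearedMinkowski], by linarith⟩, shearedMinkowski_nondegenerate hposdef,
    fun v hv => by simpa using hposdef v hv, fun S hS => ?_⟩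
  have := S.finrank_lt_of_forall_neg (fun x => shearedMinkowski h W x x) hS
    (x := ((1 : ℝ), W)) (by simp) (by simp)
  rw [finrank_prod, finrank_self] at this
  omega
end

section
/- For every nonzero v ∈ V one has F(v) > 0, and F(v) is the unique real number s > 0 satisfying h(v − sW, v − sW) = s². (This is the Zermelo-data characterization H(v − F(v)W) = F(v) of the Randers norm, where H := √(h(·,·)).) -/
/-!
Expanding `h(v - sW, v - sW) = s²` turns the Zermelo condition into the quadratic equation
`Λ s² + 2 h(v,W) s = h(v,v)`. For a positive `s` it forces `Λ s + h(v,W) > 0`, so completing the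
square singles out the root `s = (-h(v,W) + √(h(v,W)² + Λ h(v,v)))/Λ`, which is `F v`.
-/

theorem LinearMap.apply_sub_smul_sub_smul {R M : Type*} [CommRing R] [AddCommGroup M] [Module R M]
    (h : M →ₗ[R] M →ₗ[R] R) (hsymm : ∀ x y : M, h x y = h y x) (v w : M) (s : R) :
    h (v - s • w) (v - s • w) = h v v - 2 * s * h v w + s ^ 2 * h w w := by
  simp only [map_sub, map_smul, LinearMap.sub_apply, LinearMap.smul_apply, smul_eq_mul, hsymm w v]
  ring

theorem Real.quadratic_pos_root_pos {Λ a b : ℝ} (hΛ : 0 < Λ) (hb : 0 < b) :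
    0 < (-a + √(a ^ 2 + Λ * b)) / Λ := by
  have hsqrt : |a| < √(a ^ 2 + Λ * b) := by
    rw [← Real.sqrt_sq_eq_abs]
    exact Real.sqrt_lt_sqrt (sq_nonneg a) (by linarith [mul_pos hΛ hb])
  exact div_pos (by linarith [le_abs_self a]) hΛ

theorem Real.quadratic_eq_iff_eq_pos_root {Λ a b s : ℝ} (hΛ : 0 < Λ) (hb : 0 < b) (hs : 0 < s) :
    Λ * s ^ 2 + 2 * a * s = b ↔ s = (-a + √(a ^ 2 + Λ * b)) / Λ := by
  rw [eq_div_iff hΛ.ne', eq_neg_add_iff_add_eq]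
  constructor
  · intro hq
    -- `s (Λ s + 2a) = b > 0` makes `Λ s + 2a` positive, hence also `Λ s + a`.
    have hlin : 0 < Λ * s + 2 * a := pos_of_mul_pos_right (by linarith : 0 < s * (Λ * s + 2 * a))
      hs.le
    have hroot : 0 ≤ a + s * Λ := by nlinarith
    rw [← Real.sqrt_sq hroot]
    congr 1
    linear_combination Λ * hq
  · intro hroot
    have hD : 0 ≤ a ^ 2 + Λ * b := by positivity
    have hsq : (a + s * Λ) ^ 2 = a ^ 2 + Λ * b := by rw [hroot, Real.sq_sqrt hD]
    have hscaled : Λ * (Λ * s ^ 2 + 2 * a * s - b) = 0 := by linear_combination hsq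
    linarith [(mul_eq_zero.1 hscaled).resolve_left hΛ.ne']

theorem stmt_2_general {V : Type*} [AddCommGroup V] [Module ℝ V]
    (h : V →ₗ[ℝ] V →ₗ[ℝ] ℝ)
    (hsymm : ∀ x y : V, h x y = h y x)
    (hposdef : ∀ x : V, x ≠ 0 → 0 < h x x)
    (W : V) (hW : h W W < 1)
    (Λ : ℝ) (hΛ : Λ = 1 - h W W)
    (F : V → ℝ)
    (hF : ∀ v : V, F v = (-(h v W) + Real.sqrt ((h v W) ^ 2 + Λ * h v v)) / Λ) :
    ∀ v : V, v ≠ 0 →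
      0 < F v ∧
      h (v - F v • W) (v - F v • W) = (F v) ^ 2 ∧
      (∀ s : ℝ, 0 < s → h (v - s • W) (v - s • W) = s ^ 2 → s = F v) := by
  intro v hv
  have hΛpos : 0 < Λ := by linarith
  have hvv : 0 < h v v := hposdef v hv
  have hzermelo : ∀ s : ℝ,
      h (v - s • W) (v - s • W) = s ^ 2 ↔ Λ * s ^ 2 + 2 * h v W * s = h v v := by
    intro s
    rw [h.apply_sub_smul_sub_smul hsymm, hΛ]
    constructor <;> intro <;> linarith
  have hFpos : 0 < F v := hF v ▸ Real.quadratic_pos_root_pos hΛpos hvv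
  refine ⟨hFpos, ?_, fun s hs hs' => ?_⟩
  · exact (hzermelo _).2 ((Real.quadratic_eq_iff_eq_pos_root hΛpos hvv hFpos).2 (hF v))
  · exact ((Real.quadratic_eq_iff_eq_pos_root hΛpos hvv hs).1 ((hzermelo s).1 hs')).trans
      (hF v).symm

/-- For nonzero `v`, the Randers norm `F v` with Zermelo data `(h, W)`
is positive and is the unique `s > 0` with `h(v − sW, v − sW) = s²`
(the Zermelo characterization `H(v − F(v)W) = F(v)`). -/
theorem stmt_2 {V : Type*} [AddCommGroup V] [Module ℝ V] [FiniteDimensional ℝ V]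
    (h : V →ₗ[ℝ] V →ₗ[ℝ] ℝ)
    (hsymm : ∀ x y : V, h x y = h y x)
    (hposdef : ∀ x : V, x ≠ 0 → 0 < h x x)
    (W : V) (hW : h W W < 1)
    (Λ : ℝ) (hΛ : Λ = 1 - h W W)
    (F : V → ℝ)
    (hF : ∀ v : V, F v = (-(h v W) + Real.sqrt ((h v W) ^ 2 + Λ * h v v)) / Λ) :
    ∀ v : V, v ≠ 0 →
      0 < F v ∧
      h (v - F v • W) (v - F v • W) = (F v) ^ 2 ∧
      (∀ s : ℝ, 0 < s → h (v - s • W) (v - s • W) = s ^ 2 → s = F v) :=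
  stmt_2_general h hsymm hposdef W hW Λ hΛ F hF
end

section
/- Let P ⊆ V be a linear subspace and u ∈ V a nonzero vector. Then the following are equivalent: (i) F(u) = 1 and for every w ∈ P the directional derivative (d/dδ)[F(u + δw)²] at δ = 0 vanishes (i.e., u is F-unit and F-orthogonal to P); (ii) the vector v := u − W satisfies h(v,v) = 1 and h(v,w) = 0 for all w ∈ P (i.e., v is h-unit and h-orthogonal to P). In particular, u satisfies (i) if and only if u = v + W with v h-unit and h-orthogonal to P. -/
/-!
Write `D(u) = h(u,W)² + Λ h(u,u)`, so `F(u) = (-h(u,W) + √D(u)) / Λ`. For `t > 0`, `F(u) = t`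
means `√D(u) = Λ t + h(u,W)`; squaring turns this into the quadratic `h(u - tW, u - tW) = t²`,
i.e. `u / t - W` is `h`-unit. Differentiating along `δ ↦ u + δ w` gives
`dF_u(w) = h(u - F(u) W, w) / √D(u)`, so at an `F`-unit vector the derivative of `F²` in
direction `w` is a positive multiple of `h(u - W, w)`.
-/

section Randers

variable {V : Type*} [AddCommGroup V] [Module ℝ V] (h : V →ₗ[ℝ] V →ₗ[ℝ] ℝ) (W : V) (Λ : ℝ)

noncomputable def randersDisc (x : V) : ℝ := h x W ^ 2 + Λ * h x x

noncomputable def randersNorm (x : V) : ℝ := (-(h x W) + √(randersDisc h W Λ x)) / Λ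

variable {h W Λ}

theorem sqrt_randersDisc_eq (hΛ : Λ ≠ 0) (x : V) :
    √(randersDisc h W Λ x) = Λ * randersNorm h W Λ x + h x W := by
  rw [randersNorm]; field_simp; ring

theorem randersNorm_eq_iff (hsymm : ∀ x y : V, h x y = h y x) (hpsd : ∀ x : V, 0 ≤ h x x)
    (hΛ : Λ = 1 - h W W) (hΛpos : 0 < Λ) (u : V) {t : ℝ} (ht : 0 < t) :
    randersNorm h W Λ u = t ↔ h (u - t • W) (u - t • W) = t ^ 2 := by
  have hexpand : h (u - t • W) (u - t • W) = h u u - 2 * t * h u W + t ^ 2 * h W W := by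
    simp only [map_sub, map_smul, LinearMap.sub_apply, LinearMap.smul_apply, smul_eq_mul]
    rw [hsymm W u]; ring
  have hsqrt := sqrt_randersDisc_eq (h := h) (W := W) hΛpos.ne' u
  rw [hexpand]
  constructor
  · rintro rfl
    have hdisc := Real.sq_sqrt (by unfold randersDisc; nlinarith [hpsd u] : 0 ≤ randersDisc h W Λ u)
    rw [hsqrt, randersDisc] at hdisc
    subst hΛ; nlinarith
  · intro hunit
    have hdisc : randersDisc h W Λ u = (Λ * t + h u W) ^ 2 := by
      rw [randersDisc]; subst hΛ; nlinarith
    have hpos : 0 ≤ Λ * t + h u W := by nlinarith [hpsd u]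
    rw [hdisc, Real.sqrt_sq hpos] at hsqrt
    exact mul_left_cancel₀ hΛpos.ne' (by linarith)

theorem randersDisc_pos_of_randersNorm_pos (hpsd : ∀ x : V, 0 ≤ h x x) (hΛpos : 0 < Λ) {u : V}
    (hu : 0 < randersNorm h W Λ u) : 0 < randersDisc h W Λ u := by
  by_contra! hle
  have hzero : √(randersDisc h W Λ u) = 0 := Real.sqrt_eq_zero'.mpr hle
  rw [randersNorm, hzero] at hu
  have hneg : h u W < 0 := by
    rcases div_pos_iff.mp hu with ⟨_, _⟩ | ⟨_, _⟩ <;> linarith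
  rw [randersDisc] at hle
  nlinarith [hpsd u]

theorem hasDerivAt_apply_add_smul (u w y : V) :
    HasDerivAt (fun δ : ℝ => h (u + δ • w) y) (h w y) 0 := by
  simp only [map_add, map_smul, LinearMap.add_apply, LinearMap.smul_apply, smul_eq_mul]
  simpa using ((hasDerivAt_id (0 : ℝ)).mul_const (h w y)).const_add (h u y)

theorem hasDerivAt_apply_self_add_smul (hsymm : ∀ x y : V, h x y = h y x) (u w : V) :
    HasDerivAt (fun δ : ℝ => h (u + δ • w) (u + δ • w)) (2 * h u w) 0 := by
  have hline : (fun δ : ℝ => h (u + δ • w) (u + δ • w)) =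
      fun δ => h u u + δ * (2 * h u w) + δ ^ 2 * h w w := by
    ext δ
    simp only [map_add, map_smul, LinearMap.add_apply, LinearMap.smul_apply, smul_eq_mul]
    rw [hsymm w u]; ring
  rw [hline]
  simpa using (((hasDerivAt_id (0 : ℝ)).mul_const (2 * h u w)).const_add (h u u)).fun_add
    ((hasDerivAt_pow 2 (0 : ℝ)).mul_const (h w w))

theorem hasDerivAt_randersNorm_add_smul (hsymm : ∀ x y : V, h x y = h y x) (hΛ : Λ ≠ 0)
    {u : V} (hu : 0 < randersDisc h W Λ u) (w : V) :
    HasDerivAt (fun δ : ℝ => randersNorm h W Λ (u + δ • w))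
      (h (u - randersNorm h W Λ u • W) w / √(randersDisc h W Λ u)) 0 := by
  have hA := hasDerivAt_apply_add_smul (h := h) u w W
  have hdisc : HasDerivAt (fun δ : ℝ => randersDisc h W Λ (u + δ • w))
      (2 * h u W * h w W + Λ * (2 * h u w)) 0 :=
    ((hA.fun_pow 2).fun_add ((hasDerivAt_apply_self_add_smul hsymm u w).const_mul Λ)).congr_deriv
      (by simp)
  refine ((hA.fun_neg.fun_add (hdisc.sqrt (by simpa using hu.ne'))).div_const Λ).congr_deriv ?_
  have hS := (Real.sqrt_pos.mpr hu).ne'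
  simp only [zero_smul, add_zero, map_sub, map_smul, LinearMap.sub_apply, LinearMap.smul_apply,
    smul_eq_mul]
  rw [hsymm W w, randersNorm]
  field_simp
  ring

theorem hasDerivAt_sq_randersNorm_add_smul (hsymm : ∀ x y : V, h x y = h y x) (hΛ : Λ ≠ 0)
    {u : V} (hu : 0 < randersDisc h W Λ u) (w : V) :
    HasDerivAt (fun δ : ℝ => randersNorm h W Λ (u + δ • w) ^ 2)
      (2 * randersNorm h W Λ u * h (u - randersNorm h W Λ u • W) w /
        √(randersDisc h W Λ u)) 0 := by
  refine ((hasDerivAt_randersNorm_add_smul hsymm hΛ hu w).fun_pow 2).congr_deriv ?_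
  simp
  ring

end Randers

theorem stmt_3_general {V : Type*} [AddCommGroup V] [Module ℝ V]
    (h : V →ₗ[ℝ] V →ₗ[ℝ] ℝ)
    (hsymm : ∀ x y : V, h x y = h y x)
    (hposdef : ∀ x : V, x ≠ 0 → 0 < h x x)
    (W : V) (hW : h W W < 1)
    (Λ : ℝ) (hΛ : Λ = 1 - h W W)
    (F : V → ℝ)
    (hF : ∀ v : V, F v = (-(h v W) + Real.sqrt ((h v W) ^ 2 + Λ * h v v)) / Λ)
    (P : Submodule ℝ V) (u : V) :
    ((F u = 1 ∧ ∀ w ∈ P, deriv (fun δ : ℝ => F (u + δ • w) ^ 2) 0 = 0) ↔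
      (h (u - W) (u - W) = 1 ∧ ∀ w ∈ P, h (u - W) w = 0)) ∧
    ((F u = 1 ∧ ∀ w ∈ P, deriv (fun δ : ℝ => F (u + δ • w) ^ 2) 0 = 0) ↔
      (∃ v : V, u = v + W ∧ h v v = 1 ∧ ∀ w ∈ P, h v w = 0)) := by
  obtain rfl : F = randersNorm h W Λ := funext hF
  have hΛpos : 0 < Λ := by linarith
  have hpsd (x : V) : 0 ≤ h x x := by
    rcases eq_or_ne x 0 with rfl | hx
    · simp
    · exact (hposdef x hx).le
  have hunit : randersNorm h W Λ u = 1 ↔ h (u - W) (u - W) = 1 := by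
    simpa using randersNorm_eq_iff hsymm hpsd hΛ hΛpos u one_pos
  have horth (hu : randersNorm h W Λ u = 1) (w : V) :
      deriv (fun δ : ℝ => randersNorm h W Λ (u + δ • w) ^ 2) 0 = 0 ↔ h (u - W) w = 0 := by
    have hdisc := randersDisc_pos_of_randersNorm_pos hpsd hΛpos (hu ▸ one_pos)
    rw [(hasDerivAt_sq_randersNorm_add_smul hsymm hΛpos.ne' hdisc w).deriv, hu, one_smul]
    simp [(Real.sqrt_pos.mpr hdisc).ne']
  have hmain : (randersNorm h W Λ u = 1 ∧
      ∀ w ∈ P, deriv (fun δ : ℝ => randersNorm h W Λ (u + δ • w) ^ 2) 0 = 0) ↔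
      (h (u - W) (u - W) = 1 ∧ ∀ w ∈ P, h (u - W) w = 0) :=
    ⟨fun ⟨hu, hd⟩ => ⟨hunit.mp hu, fun w hw => (horth hu w).mp (hd w hw)⟩,
      fun ⟨hv, ho⟩ => ⟨hunit.mpr hv, fun w hw => (horth (hunit.mpr hv) w).mpr (ho w hw)⟩⟩
  refine ⟨hmain, hmain.trans ⟨fun hv => ⟨u - W, by abel, hv⟩, ?_⟩⟩
  rintro ⟨v, rfl, hv⟩
  simpa using hv

/-- For a subspace `P ⊆ V` and nonzero `u`, `u` is `F`-unit and
`F`-orthogonal to `P` (the directional derivative of `F²` at `u` in every direction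
`w ∈ P` vanishes) iff `v := u − W` is `h`-unit and `h`-orthogonal to `P`; equivalently,
iff `u = v + W` with `v` `h`-unit and `h`-orthogonal to `P`. -/
theorem stmt_3 {V : Type*} [AddCommGroup V] [Module ℝ V] [FiniteDimensional ℝ V]
    (h : V →ₗ[ℝ] V →ₗ[ℝ] ℝ)
    (hsymm : ∀ x y : V, h x y = h y x)
    (hposdef : ∀ x : V, x ≠ 0 → 0 < h x x)
    (W : V) (hW : h W W < 1)
    (Λ : ℝ) (hΛ : Λ = 1 - h W W)
    (F : V → ℝ)
    (hF : ∀ v : V, F v = (-(h v W) + Real.sqrt ((h v W) ^ 2 + Λ * h v v)) / Λ)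
    (P : Submodule ℝ V) (u : V) (hu : u ≠ 0) :
    ((F u = 1 ∧ ∀ w ∈ P, deriv (fun δ : ℝ => F (u + δ • w) ^ 2) 0 = 0) ↔
      (h (u - W) (u - W) = 1 ∧ ∀ w ∈ P, h (u - W) w = 0)) ∧
    ((F u = 1 ∧ ∀ w ∈ P, deriv (fun δ : ℝ => F (u + δ • w) ^ 2) 0 = 0) ↔
      (∃ v : V, u = v + W ∧ h v v = 1 ∧ ∀ w ∈ P, h v w = 0)) :=
  stmt_3_general h hsymm hposdef W hW Λ hΛ F hF P u
end

section
/- For every nonzero u ∈ ker Ω there exists a unique real number s > 0 such that sT + u belongs to the topological frontier of A₀. (This is the key step establishing that a cone triple (Ω, T, ·) determines a unique positively one-homogeneous function F on ker Ω \ {0}, namely F(u) := s, characterizing the cone by v ∈ ∂A₀ ⟺ v = F(π(v))T + π(v) with π(v) = v − Ω(v)T.) -/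
/-!
Along the line `s ↦ s • T + u` the cone behaves like a half-line: if `s • T + u` lies in
`closure A₀` then for `t > s` the point `t • T + u = (s • T + u) + (t - s) • T` lies in
`closure A₀ + A₀ ⊆ A₀`. Since `A₀` is open and contains `T`, the line meets `A₀`, and since
`Ω (s • T + u) = s`, it meets `closure A₀` only for `s > 0`. Hence the parameters in the closure
form a closed half-line `[s₀, ∞)` whose open part `(s₀, ∞)` lies in `A₀`, and `s₀` is the only
parameter on the frontier.
-/

open Set Filter Topology

theorem Real.existsUnique_mem_diff_of_forall_lt_mem {P Q : Set ℝ} (hP : IsOpen P)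
    (hQ : IsClosed Q) (hQne : Q.Nonempty) (hQbdd : BddBelow Q) (hPQ : P ⊆ Q)
    (hlt : ∀ s ∈ Q, ∀ t, s < t → t ∈ P) : ∃! s, s ∈ Q ∧ s ∉ P := by
  have hleast := hQ.isLeast_csInf hQne hQbdd
  refine ⟨sInf Q, ⟨hleast.1, fun hmem => ?_⟩, fun s hs => ?_⟩
  · obtain ⟨t, hts, htP⟩ := Filter.Eventually.exists_lt (hP.mem_nhds hmem)
    exact (hts.trans_le (hleast.2 (hPQ htP))).false
  · by_contra hne
    exact hs.2 (hlt _ hleast.1 s ((hleast.2 hs.1).lt_of_ne' hne))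

section ConvexCone

variable {E : Type*} [AddCommGroup E] [Module ℝ E] [TopologicalSpace E]
  [IsTopologicalAddGroup E] [ContinuousSMul ℝ E] {A : Set E}

theorem Convex.add_mem_of_mem_closure_of_mem_interior (hconv : Convex ℝ A)
    (hcone : ∀ x ∈ A, ∀ c : ℝ, 0 < c → c • x ∈ A) {x y : E} (hx : x ∈ closure A)
    (hy : y ∈ interior A) : x + y ∈ A := by
  have hmid : (1 / 2 : ℝ) • y + (1 / 2 : ℝ) • x ∈ A :=
    interior_subset <| hconv.combo_interior_closure_mem_interior hy hx (by norm_num)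
      (by norm_num) (by norm_num)
  have := hcone _ hmid 2 two_pos
  rwa [smul_add, smul_smul, smul_smul, show (2 : ℝ) * (1 / 2) = 1 by norm_num, one_smul,
    one_smul, add_comm] at this

theorem IsOpen.exists_smul_add_mem (hopen : IsOpen A)
    (hcone : ∀ x ∈ A, ∀ c : ℝ, 0 < c → c • x ∈ A) {T : E} (hT : T ∈ A) (u : E) :
    ∃ s : ℝ, s • T + u ∈ A := by
  have hcont : Tendsto (fun t : ℝ => T + t • u) (𝓝[>] 0) (𝓝 T) :=
    tendsto_nhdsWithin_of_tendsto_nhds <|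
      (continuous_const.add (continuous_id.smul continuous_const)).tendsto' 0 T (by simp)
  obtain ⟨t, ht, htpos⟩ :=
    ((hcont.eventually (hopen.mem_nhds hT)).and self_mem_nhdsWithin).exists
  refine ⟨t⁻¹, ?_⟩
  have := hcone _ ht t⁻¹ (inv_pos.2 htpos)
  rwa [smul_add, smul_smul, inv_mul_cancel₀ (ne_of_gt htpos), one_smul] at this

end ConvexCone

theorem stmt_5_general {V : Type*} [NormedAddCommGroup V] [NormedSpace ℝ V]
    (A₀ : Set V) (hopen : IsOpen A₀) (hconv : Convex ℝ A₀)
    (hcone : ∀ x ∈ A₀, ∀ lam : ℝ, 0 < lam → lam • x ∈ A₀)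
    (Ω : V →ₗ[ℝ] ℝ) (hΩ : ∀ x ∈ closure A₀, x ≠ 0 → 0 < Ω x)
    (T : V) (hT : T ∈ A₀) (hΩT : Ω T = 1) :
    ∀ u : V, Ω u = 0 → u ≠ 0 →
      ∃! s : ℝ, 0 < s ∧ s • T + u ∈ frontier A₀ := by
  intro u hΩu hu
  set L : ℝ → V := fun s => s • T + u
  have hL : Continuous L := by fun_prop
  have hpos : ∀ s, L s ∈ closure A₀ → 0 < s := fun s hs => by
    have hΩL : Ω (L s) = s := by simp [L, hΩT, hΩu]
    refine hΩL ▸ hΩ _ hs fun h0 => hu ?_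
    have hs0 : s = 0 := by rw [← hΩL, h0, map_zero]
    simpa [L, hs0] using h0
  have hlt : ∀ s ∈ L ⁻¹' closure A₀, ∀ t, s < t → t ∈ L ⁻¹' A₀ := fun s hs t hst => by
    have := hconv.add_mem_of_mem_closure_of_mem_interior hcone hs
      (hopen.interior_eq.symm ▸ hcone T hT (t - s) (sub_pos.2 hst))
    simpa only [L, mem_preimage, show s • T + u + (t - s) • T = t • T + u by module] using this
  obtain ⟨s, hs, huniq⟩ := Real.existsUnique_mem_diff_of_forall_lt_mem (hopen.preimage hL)
    (isClosed_closure.preimage hL)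
    ((hopen.exists_smul_add_mem hcone hT u).imp fun _ => (subset_closure ·))
    ⟨0, fun s hs => (hpos s hs).le⟩ (preimage_mono subset_closure) hlt
  rw [hopen.frontier_eq]
  exact ⟨s, ⟨hpos s hs.1, hs⟩, fun t ht => huniq t ht.2⟩

/-- Let `A₀` be a nonempty open convex cone, `Ω` a linear functional which
is positive on the nonzero points of the closure of `A₀`, and `T ∈ A₀` with `Ω T = 1`.
Then for every nonzero `u ∈ ker Ω` there is a unique `s > 0` such that `sT + u` lies on
the frontier of `A₀` (so a cone triple determines a unique one-homogeneous `F` on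
`ker Ω \ {0}` with `v ∈ ∂A₀ ⟺ v = F(π v)T + π v`). -/
theorem stmt_5 {V : Type*} [NormedAddCommGroup V] [NormedSpace ℝ V]
    [FiniteDimensional ℝ V]
    (A₀ : Set V) (hne : A₀.Nonempty) (hopen : IsOpen A₀) (hconv : Convex ℝ A₀)
    (hcone : ∀ x ∈ A₀, ∀ lam : ℝ, 0 < lam → lam • x ∈ A₀)
    (Ω : V →ₗ[ℝ] ℝ) (hΩ : ∀ x ∈ closure A₀, x ≠ 0 → 0 < Ω x)
    (T : V) (hT : T ∈ A₀) (hΩT : Ω T = 1) :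
    ∀ u : V, Ω u = 0 → u ≠ 0 →
      ∃! s : ℝ, 0 < s ∧ s • T + u ∈ frontier A₀ :=
  stmt_5_general A₀ hopen hconv hcone Ω hΩ T hT hΩT
end

section
/- Let x̃ = (x̃⁰, x̃¹, …, x̃ⁿ) : I → ℝ^{n+1} be a twice differentiable curve on an open interval I satisfying the geodesic-type system (x̃ᵏ)'' = −Σ_{i,j} γᵏᵢⱼ(x̃, x̃')·(x̃ⁱ)'·(x̃ʲ)' for every k ∈ {0,…,n}, and suppose (x̃⁰)' > 0 on I. Let J := x̃⁰(I), let ρ : J → I be the inverse of x̃⁰, and define the reparametrized curve x(t) := (t, x¹(t), …, xⁿ(t)) with xᵏ(t) := x̃ᵏ(ρ(t)). Then x is twice differentiable and for every k ∈ {1,…,n} and t ∈ J: (d²xᵏ/dt²)(t) = −Σ_{i,j} γᵏᵢⱼ(x(t), ẋ(t))·ẋⁱ(t)·ẋʲ(t) + (Σ_{i,j} γ⁰ᵢⱼ(x(t), ẋ(t))·ẋⁱ(t)·ẋʲ(t))·ẋᵏ(t), where ẋ(t) = (1, ẋ¹(t), …, ẋⁿ(t)) denotes the velocity with time-component ẋ⁰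 = 1. -/
/-!
The time function `t = x̃⁰(ρ)` has positive derivative, so it is strictly increasing with open
image and its inverse `ρ` is differentiable with `ρ' = 1 / (x̃⁰)'`. The chain and quotient rules
give `ẋᵏ = (x̃ᵏ)' / (x̃⁰)'` and `ẍᵏ = ((x̃ᵏ)'' (x̃⁰)' - (x̃ᵏ)' (x̃⁰)'') / ((x̃⁰)')³`. Because `γ`
is 0-homogeneous in the velocity, `Σ γᵏᵢⱼ(x, v) vⁱ vʲ` is 2-homogeneous in `v`, so at
`ẋ = x̃' / (x̃⁰)'` it equals the same form at `x̃'` divided by `((x̃⁰)')²`; substituting the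
geodesic equations for `x̃ᵏ` and for `x̃⁰` gives the claim.
-/

open Set Filter Topology

section Reparametrization

variable {f g y : ℝ → ℝ} {a b ρ : ℝ}

theorem strictMonoOn_Ioo_of_deriv_pos (hf : ∀ σ ∈ Ioo a b, DifferentiableAt ℝ f σ)
    (hpos : ∀ σ ∈ Ioo a b, 0 < deriv f σ) : StrictMonoOn f (Ioo a b) :=
  strictMonoOn_of_deriv_pos (convex_Ioo a b)
    (fun σ hσ => (hf σ hσ).continuousAt.continuousWithinAt) (by rwa [interior_Ioo])

theorem StrictMonoOn.image_Ioo_mem_nhds (hmono : StrictMonoOn f (Ioo a b))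
    (hcont : ContinuousOn f (Ioo a b)) (hρ : ρ ∈ Ioo a b) : f '' Ioo a b ∈ 𝓝 (f ρ) := by
  obtain ⟨c, hac, hcρ⟩ := exists_between hρ.1
  obtain ⟨d, hρd, hdb⟩ := exists_between hρ.2
  have hc : c ∈ Ioo a b := ⟨hac, hcρ.trans hρ.2⟩
  have hd : d ∈ Ioo a b := ⟨hρ.1.trans hρd, hdb⟩
  refine mem_of_superset (Ioo_mem_nhds (hmono hc hρ hcρ) (hmono hρ hd hρd)) ?_
  calc Ioo (f c) (f d) ⊆ f '' Ioo c d :=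
        intermediate_value_Ioo (hcρ.trans hρd).le (hcont.mono (Icc_subset_Ioo hac hdb))
    _ ⊆ f '' Ioo a b := image_mono (Ioo_subset_Ioo hac.le hdb.le)

theorem image_Ioo_mem_nhds_of_deriv_pos (hf : ∀ σ ∈ Ioo a b, DifferentiableAt ℝ f σ)
    (hpos : ∀ σ ∈ Ioo a b, 0 < deriv f σ) (hρ : ρ ∈ Ioo a b) : f '' Ioo a b ∈ 𝓝 (f ρ) :=
  (strictMonoOn_Ioo_of_deriv_pos hf hpos).image_Ioo_mem_nhds
    (fun σ hσ => (hf σ hσ).continuousAt.continuousWithinAt) hρ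

theorem Set.LeftInvOn.strictMonoOn_image {α β : Type*} [LinearOrder α] [Preorder β]
    {f : α → β} {g : β → α} {s : Set α} (hgf : LeftInvOn g f s) (hmono : StrictMonoOn f s) :
    StrictMonoOn g (f '' s) := by
  rintro _ ⟨σ, hσ, rfl⟩ _ ⟨τ, hτ, rfl⟩ hlt
  rw [hgf hσ, hgf hτ]
  exact (hmono.lt_iff_lt hσ hτ).1 hlt

theorem hasDerivAt_leftInvOn_of_deriv_pos (hf : ∀ σ ∈ Ioo a b, DifferentiableAt ℝ f σ)
    (hpos : ∀ σ ∈ Ioo a b, 0 < deriv f σ) (hgf : LeftInvOn g f (Ioo a b)) (hρ : ρ ∈ Ioo a b) :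
    HasDerivAt g (deriv f ρ)⁻¹ (f ρ) := by
  have hnhds := image_Ioo_mem_nhds_of_deriv_pos hf hpos hρ
  have hg_cont : ContinuousAt g (f ρ) :=
    (hgf.strictMonoOn_image (strictMonoOn_Ioo_of_deriv_pos hf hpos)).continuousAt_of_image_mem_nhds
      hnhds (by rw [hgf.image_image, hgf hρ]; exact Ioo_mem_nhds hρ.1 hρ.2)
  refine HasDerivAt.of_local_left_inverse hg_cont ?_ (hpos ρ hρ).ne'
    (eventually_of_mem hnhds hgf.rightInvOn_image)
  rw [hgf hρ]
  exact (hf ρ hρ).hasDerivAt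

theorem hasDerivAt_comp_leftInvOn (hf : ∀ σ ∈ Ioo a b, DifferentiableAt ℝ f σ)
    (hpos : ∀ σ ∈ Ioo a b, 0 < deriv f σ) (hgf : LeftInvOn g f (Ioo a b)) (hρ : ρ ∈ Ioo a b)
    (hy : DifferentiableAt ℝ y ρ) :
    HasDerivAt (fun s => y (g s)) (deriv y ρ / deriv f ρ) (f ρ) := by
  rw [div_eq_mul_inv]
  exact hy.hasDerivAt.comp_of_eq (f ρ) (hasDerivAt_leftInvOn_of_deriv_pos hf hpos hgf hρ)
    (hgf hρ).symm

theorem hasDerivAt_deriv_comp_leftInvOn (hf : ∀ σ ∈ Ioo a b, DifferentiableAt ℝ f σ)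
    (hpos : ∀ σ ∈ Ioo a b, 0 < deriv f σ) (hgf : LeftInvOn g f (Ioo a b)) (hρ : ρ ∈ Ioo a b)
    (hy : ∀ σ ∈ Ioo a b, DifferentiableAt ℝ y σ) (hy' : DifferentiableAt ℝ (deriv y) ρ)
    (hf' : DifferentiableAt ℝ (deriv f) ρ) :
    HasDerivAt (deriv fun s => y (g s))
      ((deriv (deriv y) ρ * deriv f ρ - deriv y ρ * deriv (deriv f) ρ) / deriv f ρ ^ 3) (f ρ) := by
  have hf₀ : deriv f ρ ≠ 0 := (hpos ρ hρ).ne'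
  have hquot := hy'.hasDerivAt.div hf'.hasDerivAt hf₀
  have heq : deriv (fun s => y (g s)) =ᶠ[𝓝 (f ρ)] fun s => deriv y (g s) / deriv f (g s) := by
    filter_upwards [image_Ioo_mem_nhds_of_deriv_pos hf hpos hρ]
    rintro _ ⟨σ, hσ, rfl⟩
    rw [hgf hσ]
    exact (hasDerivAt_comp_leftInvOn hf hpos hgf hσ (hy σ hσ)).deriv
  refine ((hquot.comp_of_eq (f ρ) (hasDerivAt_leftInvOn_of_deriv_pos hf hpos hgf hρ)
    (hgf hρ).symm).congr_of_eventuallyEq heq).congr_deriv ?_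
  field_simp

end Reparametrization

section ChristoffelQuad

variable {ι : Type*} [Fintype ι]

def christoffelQuad (γ : ι → ι → ι → (ι → ℝ) → (ι → ℝ) → ℝ) (k : ι) (x v : ι → ℝ) : ℝ :=
  ∑ i, ∑ j, γ k i j x v * v i * v j

theorem christoffelQuad_smul {γ : ι → ι → ι → (ι → ℝ) → (ι → ℝ) → ℝ}
    (hγ : ∀ k i j x v, ∀ c : ℝ, 0 < c → γ k i j x (c • v) = γ k i j x v)
    {c : ℝ} (hc : 0 < c) (k : ι) (x v : ι → ℝ) :
    christoffelQuad γ k x (c • v) = c ^ 2 * christoffelQuad γ k x v := by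
  simp only [christoffelQuad, hγ _ _ _ _ _ _ hc, Pi.smul_apply, smul_eq_mul, Finset.mul_sum]
  exact Finset.sum_congr rfl fun i _ => Finset.sum_congr rfl fun j _ => by ring

end ChristoffelQuad

theorem stmt_8_general (n : ℕ)
    (γ : Fin (n + 1) → Fin (n + 1) → Fin (n + 1) →
      (Fin (n + 1) → ℝ) → (Fin (n + 1) → ℝ) → ℝ)
    (hγhom : ∀ k i j x v, ∀ lam : ℝ, 0 < lam → γ k i j x (lam • v) = γ k i j x v)
    (a b : ℝ)
    (xt : ℝ → Fin (n + 1) → ℝ)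
    (hd1 : ∀ k, ∀ ρ ∈ Set.Ioo a b, DifferentiableAt ℝ (fun ρ => xt ρ k) ρ)
    (hd2 : ∀ k, ∀ ρ ∈ Set.Ioo a b,
      DifferentiableAt ℝ (deriv (fun ρ => xt ρ k)) ρ)
    (hgeo : ∀ k, ∀ ρ ∈ Set.Ioo a b,
      deriv (deriv (fun ρ => xt ρ k)) ρ =
        - ∑ i, ∑ j, γ k i j (xt ρ) (fun l => deriv (fun ρ => xt ρ l) ρ)
            * deriv (fun ρ => xt ρ i) ρ * deriv (fun ρ => xt ρ j) ρ)
    (hpos : ∀ ρ ∈ Set.Ioo a b, 0 < deriv (fun ρ => xt ρ 0) ρ)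
    (J : Set ℝ) (hJ : J = (fun ρ => xt ρ 0) '' Set.Ioo a b)
    (ρf : ℝ → ℝ)
    (hρf1 : ∀ ρ ∈ Set.Ioo a b, ρf (xt ρ 0) = ρ)
    (x : ℝ → Fin (n + 1) → ℝ) (hx : ∀ t k, x t k = xt (ρf t) k) :
    ∀ t ∈ J,
      (∀ l, DifferentiableAt ℝ (fun s => x s l) t ∧
        DifferentiableAt ℝ (deriv (fun s => x s l)) t) ∧
      deriv (fun s => x s 0) t = 1 ∧
      (∀ k : Fin (n + 1), k ≠ 0 →
        deriv (deriv (fun s => x s k)) t =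
          - (∑ i, ∑ j, γ k i j (x t) (fun l => deriv (fun s => x s l) t)
              * deriv (fun s => x s i) t * deriv (fun s => x s j) t)
          + (∑ i, ∑ j, γ 0 i j (x t) (fun l => deriv (fun s => x s l) t)
              * deriv (fun s => x s i) t * deriv (fun s => x s j) t)
            * deriv (fun s => x s k) t) := by
  subst hJ
  obtain rfl : x = fun s => xt (ρf s) := funext fun s => funext (hx s)
  rintro _ ⟨ρ, hρ, rfl⟩
  beta_reduce
  have hinv : LeftInvOn ρf (fun σ => xt σ 0) (Ioo a b) := hρf1
  have hv₀ : 0 < deriv (fun σ => xt σ 0) ρ := hpos ρ hρ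
  have hD : ∀ k, HasDerivAt (fun s => xt (ρf s) k)
      (deriv (fun σ => xt σ k) ρ / deriv (fun σ => xt σ 0) ρ) (xt ρ 0) := fun k =>
    hasDerivAt_comp_leftInvOn (hd1 0) hpos hinv hρ (hd1 k ρ hρ)
  have hD2 : ∀ k, HasDerivAt (deriv fun s => xt (ρf s) k)
      ((deriv (deriv fun σ => xt σ k) ρ * deriv (fun σ => xt σ 0) ρ
        - deriv (fun σ => xt σ k) ρ * deriv (deriv fun σ => xt σ 0) ρ)
        / deriv (fun σ => xt σ 0) ρ ^ 3) (xt ρ 0) := fun k =>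
    hasDerivAt_deriv_comp_leftInvOn (hd1 0) hpos hinv hρ (hd1 k) (hd2 k ρ hρ) (hd2 0 ρ hρ)
  have hvel : (fun l => deriv (fun s => xt (ρf s) l) (xt ρ 0))
      = (deriv (fun σ => xt σ 0) ρ)⁻¹ • fun l => deriv (fun σ => xt σ l) ρ :=
    funext fun l => by rw [(hD l).deriv, Pi.smul_apply, smul_eq_mul, div_eq_inv_mul]
  have hacc : ∀ k, deriv (deriv fun σ => xt σ k) ρ
      = -christoffelQuad γ k (xt ρ) fun l => deriv (fun σ => xt σ l) ρ := fun k => hgeo k ρ hρ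
  refine ⟨fun l => ⟨(hD l).differentiableAt, (hD2 l).differentiableAt⟩,
    by rw [(hD 0).deriv, div_self hv₀.ne'], fun k _ => ?_⟩
  change _ = -christoffelQuad γ k _ _ + christoffelQuad γ 0 _ _ * _
  rw [hρf1 ρ hρ, hvel, christoffelQuad_smul hγhom (inv_pos.2 hv₀),
    christoffelQuad_smul hγhom (inv_pos.2 hv₀), (hD2 k).deriv, (hD k).deriv, hacc k, hacc 0]
  field_simp
  ring

/-- If `x̃ : I → ℝ^{n+1}` solves the geodesic-type system
`(x̃ᵏ)'' = −Σ γᵏᵢⱼ(x̃, x̃')(x̃ⁱ)'(x̃ʲ)'` with `(x̃⁰)' > 0`, then the reparametrization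
`x(t) = x̃(ρ(t))` by the time `t = x̃⁰` (with inverse `ρ`) is twice differentiable and
solves `ẍᵏ = −Σ γᵏᵢⱼ(x, ẋ)ẋⁱẋʲ + (Σ γ⁰ᵢⱼ(x, ẋ)ẋⁱẋʲ)ẋᵏ` for `k = 1, …, n`, where the
velocity `ẋ` has time-component `ẋ⁰ = 1`. -/
theorem stmt_8 (n : ℕ) (hn : 1 ≤ n)
    (γ : Fin (n + 1) → Fin (n + 1) → Fin (n + 1) →
      (Fin (n + 1) → ℝ) → (Fin (n + 1) → ℝ) → ℝ)
    (hγcont : ∀ k i j, ContinuousOn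
      (fun p : (Fin (n + 1) → ℝ) × (Fin (n + 1) → ℝ) => γ k i j p.1 p.2)
      {p | p.2 ≠ 0})
    (hγhom : ∀ k i j x v, ∀ lam : ℝ, 0 < lam → γ k i j x (lam • v) = γ k i j x v)
    (a b : ℝ) (hab : a < b)
    (xt : ℝ → Fin (n + 1) → ℝ)
    (hd1 : ∀ k, ∀ ρ ∈ Set.Ioo a b, DifferentiableAt ℝ (fun ρ => xt ρ k) ρ)
    (hd2 : ∀ k, ∀ ρ ∈ Set.Ioo a b,
      DifferentiableAt ℝ (deriv (fun ρ => xt ρ k)) ρ)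
    (hgeo : ∀ k, ∀ ρ ∈ Set.Ioo a b,
      deriv (deriv (fun ρ => xt ρ k)) ρ =
        - ∑ i, ∑ j, γ k i j (xt ρ) (fun l => deriv (fun ρ => xt ρ l) ρ)
            * deriv (fun ρ => xt ρ i) ρ * deriv (fun ρ => xt ρ j) ρ)
    (hpos : ∀ ρ ∈ Set.Ioo a b, 0 < deriv (fun ρ => xt ρ 0) ρ)
    (J : Set ℝ) (hJ : J = (fun ρ => xt ρ 0) '' Set.Ioo a b)
    (ρf : ℝ → ℝ)
    (hρf1 : ∀ ρ ∈ Set.Ioo a b, ρf (xt ρ 0) = ρ)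
    (hρf2 : ∀ t ∈ J, ρf t ∈ Set.Ioo a b ∧ xt (ρf t) 0 = t)
    (x : ℝ → Fin (n + 1) → ℝ) (hx : ∀ t k, x t k = xt (ρf t) k) :
    ∀ t ∈ J,
      (∀ l, DifferentiableAt ℝ (fun s => x s l) t ∧
        DifferentiableAt ℝ (deriv (fun s => x s l)) t) ∧
      deriv (fun s => x s 0) t = 1 ∧
      (∀ k : Fin (n + 1), k ≠ 0 →
        deriv (deriv (fun s => x s k)) t =
          - (∑ i, ∑ j, γ k i j (x t) (fun l => deriv (fun s => x s l) t)
              * deriv (fun s => x s i) t * deriv (fun s => x s j) t)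
          + (∑ i, ∑ j, γ 0 i j (x t) (fun l => deriv (fun s => x s l) t)
              * deriv (fun s => x s i) t * deriv (fun s => x s j) t)
            * deriv (fun s => x s k) t) :=
  stmt_8_general n γ hγhom a b xt hd1 hd2 hgeo hpos J hJ ρf hρf1 x hx
end

section
/- Set D := √(a²·(p·sin θ + q·cos θ)² + b²·(p·cos θ − q·sin θ)²); then D > 0, and the set of all (X, Y) ∈ ℝ² satisfying the orthogonality conditions h((X,Y) − W, (X,Y) − W) = 1 and h((X,Y) − W, (p,q)) = 0 consists of exactly the two points given by Richards' formulas: X = ±(a²·cos θ·(p·sin θ + q·cos θ) − b²·sin θ·(p·cos θ − q·sin θ))/D + w₁ and Y = ±(−a²·sin θ·(p·sin θ + q·cos θ) − b²·cos θ·(p·cos θ − q·sin θ))/D + w₂, with matching signs. -/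
/-!
In the rotated coordinates `u = x sin θ + y cos θ`, `v = x cos θ - y sin θ` the form `h` is
diagonal: `a² b² h = a² u u' + b² v v'`. Writing `(A, B)` for the rotated `(p, q)`, Lagrange's
identity `(a² u² + b² v²)(a² A² + b² B²) = (a² u A + b² v B)² + a² b² (u B - v A)²` turns the two
conditions into the linear system `u B - v A = ±D`, `a² u A + b² v B = 0`, of determinant `D²`.
-/

theorem rotation_eq_iff {R : Type*} [CommRing R] {s c : R} (hsc : s ^ 2 + c ^ 2 = 1)
    (x y u v : R) :
    (x * s + y * c = u ∧ x * c - y * s = v) ↔ (x = s * u + c * v ∧ y = c * u - s * v) := by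
  constructor
  · rintro ⟨rfl, rfl⟩
    exact ⟨by linear_combination (-x) * hsc, by linear_combination (-y) * hsc⟩
  · rintro ⟨rfl, rfl⟩
    exact ⟨by linear_combination u * hsc, by linear_combination v * hsc⟩

theorem weighted_sq_rotation_pos {α β s c p q : ℝ} (hα : 0 < α) (hβ : 0 < β)
    (hsc : s ^ 2 + c ^ 2 = 1) (hpq : (p, q) ≠ ((0 : ℝ), (0 : ℝ))) :
    0 < α * (p * s + q * c) ^ 2 + β * (p * c - q * s) ^ 2 := by
  have hrot : (p * s + q * c, p * c - q * s) ≠ ((0 : ℝ), (0 : ℝ)) := by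
    intro h0
    obtain ⟨rfl, rfl⟩ := (rotation_eq_iff hsc p q 0 0).1 (Prod.ext_iff.1 h0)
    exact hpq (by simp)
  rcases eq_or_ne (p * s + q * c) 0 with hA | hA
  · have hB : p * c - q * s ≠ 0 := fun hB => hrot (by rw [hA, hB])
    positivity
  · positivity

theorem mem_ellipse_and_orthogonal_iff {K : Type*} [Field K] {α β A B D u v : K}
    (hα : α ≠ 0) (hβ : β ≠ 0) (hD : D ^ 2 = α * A ^ 2 + β * B ^ 2) (hD0 : D ≠ 0) :
    (α * u * u + β * v * v = α * β ∧ α * u * A + β * v * B = 0) ↔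
      (u = -(β * B) / D ∧ v = α * A / D) ∨ (u = β * B / D ∧ v = -(α * A) / D) := by
  constructor
  · rintro ⟨hnorm, horth⟩
    have hcross : (u * B - v * A) ^ 2 = D ^ 2 := by
      have hlagrange : α * β * ((u * B - v * A) ^ 2 - D ^ 2) = 0 := by
        linear_combination (α * A ^ 2 + β * B ^ 2) * hnorm - α * β * hD
          - (α * u * A + β * v * B) * horth
      exact sub_eq_zero.1 ((mul_eq_zero.1 hlagrange).resolve_left (mul_ne_zero hα hβ))
    rcases sq_eq_sq_iff_eq_or_eq_neg.1 hcross with hsign | hsign <;> [right; left] <;>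
      exact ⟨(eq_div_iff hD0).2 <| mul_right_cancel₀ hD0 <| by
          linear_combination u * hD + β * B * hsign + A * horth,
        (eq_div_iff hD0).2 <| mul_right_cancel₀ hD0 <| by
          linear_combination v * hD - α * A * hsign + B * horth⟩
  · rintro (⟨rfl, rfl⟩ | ⟨rfl, rfl⟩) <;>
      exact ⟨by field_simp; linear_combination -hD, by field_simp; ring⟩

/-- Richards' equations. With `h` the inner product on `ℝ²` whose unit
circle is the ellipse with semi-axes `a, b` rotated clockwise by `θ`, wind
`W = (w₁, w₂)` and tangent direction `(p, q) ≠ 0`, set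
`D := √(a²(p sin θ + q cos θ)² + b²(p cos θ − q sin θ)²)`. Then `D > 0` and the
solutions `(X, Y)` of the orthogonality conditions `h((X,Y) − W, (X,Y) − W) = 1`,
`h((X,Y) − W, (p,q)) = 0` are exactly the two points of Richards' formulas
(with matching signs `±`). -/
theorem stmt_9 (a b θ w₁ w₂ p q : ℝ) (ha : 0 < a) (hb : 0 < b)
    (hpq : (p, q) ≠ ((0 : ℝ), (0 : ℝ)))
    (h : ℝ × ℝ → ℝ × ℝ → ℝ)
    (hh : ∀ v u : ℝ × ℝ, h v u = (1 / (a ^ 2 * b ^ 2)) *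
      ((a ^ 2 * Real.sin θ ^ 2 + b ^ 2 * Real.cos θ ^ 2) * v.1 * u.1
        + (a ^ 2 - b ^ 2) * Real.sin θ * Real.cos θ * (v.1 * u.2 + v.2 * u.1)
        + (a ^ 2 * Real.cos θ ^ 2 + b ^ 2 * Real.sin θ ^ 2) * v.2 * u.2))
    (D : ℝ)
    (hD : D = Real.sqrt (a ^ 2 * (p * Real.sin θ + q * Real.cos θ) ^ 2
      + b ^ 2 * (p * Real.cos θ - q * Real.sin θ) ^ 2)) :
    0 < D ∧
    ∀ X Y : ℝ,
      (h (X - w₁, Y - w₂) (X - w₁, Y - w₂) = 1 ∧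
        h (X - w₁, Y - w₂) (p, q) = 0) ↔
      ((X = (a ^ 2 * Real.cos θ * (p * Real.sin θ + q * Real.cos θ)
            - b ^ 2 * Real.sin θ * (p * Real.cos θ - q * Real.sin θ)) / D + w₁
        ∧ Y = (-(a ^ 2) * Real.sin θ * (p * Real.sin θ + q * Real.cos θ)
            - b ^ 2 * Real.cos θ * (p * Real.cos θ - q * Real.sin θ)) / D + w₂)
      ∨ (X = -((a ^ 2 * Real.cos θ * (p * Real.sin θ + q * Real.cos θ)
            - b ^ 2 * Real.sin θ * (p * Real.cos θ - q * Real.sin θ)) / D) + w₁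
        ∧ Y = -((-(a ^ 2) * Real.sin θ * (p * Real.sin θ + q * Real.cos θ)
            - b ^ 2 * Real.cos θ * (p * Real.cos θ - q * Real.sin θ)) / D) + w₂)) := by
  have hsc : Real.sin θ ^ 2 + Real.cos θ ^ 2 = 1 := Real.sin_sq_add_cos_sq θ
  have hrad := weighted_sq_rotation_pos (pow_pos ha 2) (pow_pos hb 2) hsc hpq
  have hDpos : 0 < D := hD ▸ Real.sqrt_pos.2 hrad
  have hD2 : D ^ 2 = a ^ 2 * (p * Real.sin θ + q * Real.cos θ) ^ 2
      + b ^ 2 * (p * Real.cos θ - q * Real.sin θ) ^ 2 := hD ▸ Real.sq_sqrt hrad.le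
  have hab : a ^ 2 * b ^ 2 ≠ 0 := by positivity
  have hform : ∀ x y x' y', h (x, y) (x', y') =
      (a ^ 2 * (x * Real.sin θ + y * Real.cos θ) * (x' * Real.sin θ + y' * Real.cos θ)
        + b ^ 2 * (x * Real.cos θ - y * Real.sin θ) * (x' * Real.cos θ - y' * Real.sin θ))
        / (a ^ 2 * b ^ 2) := fun x y x' y' => by
    rw [hh]
    ring
  refine ⟨hDpos, fun X Y => ?_⟩
  rw [hform, hform, div_eq_one_iff_eq hab, div_eq_zero_iff, or_iff_left hab,
    mem_ellipse_and_orthogonal_iff (pow_ne_zero 2 ha.ne') (pow_ne_zero 2 hb.ne') hD2 hDpos.ne',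
    rotation_eq_iff hsc, rotation_eq_iff hsc]
  refine or_congr (and_congr ?_ ?_) (and_congr ?_ ?_) <;>
    exact ⟨fun hE => by linear_combination hE, fun hE => by linear_combination hE⟩
end

section
/- Suppose h(v,W) > 0 and h(v,W)² > (h(W,W) − 1)·h(v,v). Then v ≠ 0 and the equation h(v − sW, v − sW) = s² has exactly two real solutions in s, both strictly positive, namely s_± = (h(v,W) ± √(h(v,W)² − (h(W,W) − 1)·h(v,v)))/(h(W,W) − 1); consequently the conic Finsler value F(v) := s_− and the Lorentzian Finsler value F_l(v) := s_+ of the wind Finslerian structure satisfy 0 < F(v) < F_l(v). -/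
/-!
Expanding `h(v - sW, v - sW) = s²` by bilinearity and symmetry turns it into the real quadratic
`(h(W,W) - 1) s² - 2 h(v,W) s + h(v,v) = 0`, whose roots are `s±`. Since `h(v,v) > 0`, the square
root of the discriminant is strictly smaller than `h(v,W)`, so both roots are positive.
-/

theorem quadratic_eq_zero_iff_of_half_discrim {K : Type*} [Field K] {a b c d x : K} (ha : a ≠ 0)
    (hd : b ^ 2 - a * c = d * d) :
    a * x ^ 2 - 2 * b * x + c = 0 ↔ x = (b - d) / a ∨ x = (b + d) / a := by
  have hfactor : a * (a * x ^ 2 - 2 * b * x + c) = (a * x - (b - d)) * (a * x - (b + d)) := by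
    linear_combination -hd
  rw [← mul_eq_zero_iff_left ha, hfactor, mul_eq_zero, sub_eq_zero, sub_eq_zero,
    eq_div_iff ha, eq_div_iff ha, mul_comm x]

theorem LinearMap.BilinForm.apply_sub_smul_self {R M : Type*} [CommRing R] [AddCommGroup M]
    [Module R M] (h : LinearMap.BilinForm R M) (hsymm : ∀ x y, h x y = h y x) (v w : M) (s : R) :
    h (v - s • w) (v - s • w) = h v v - 2 * s * h v w + s ^ 2 * h w w := by
  simp only [map_sub, map_smul, LinearMap.sub_apply, LinearMap.smul_apply, smul_eq_mul, hsymm w v]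
  ring

theorem Real.sqrt_sq_sub_mul_lt {a b c : ℝ} (hb : 0 < b) (hac : 0 < a * c) :
    √(b ^ 2 - a * c) < b :=
  (Real.sqrt_lt' hb).2 (by linarith)

theorem stmt_10_general {V : Type*} [AddCommGroup V] [Module ℝ V]
    (h : V →ₗ[ℝ] V →ₗ[ℝ] ℝ)
    (hsymm : ∀ x y : V, h x y = h y x)
    (hposdef : ∀ x : V, x ≠ 0 → 0 < h x x)
    (W : V) (hW : 1 < h W W)
    (v : V) (hvW : 0 < h v W)
    (hdisc : (h W W - 1) * h v v < (h v W) ^ 2)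
    (sMinus sPlus : ℝ)
    (hsMinus : sMinus = (h v W - Real.sqrt ((h v W) ^ 2 - (h W W - 1) * h v v))
      / (h W W - 1))
    (hsPlus : sPlus = (h v W + Real.sqrt ((h v W) ^ 2 - (h W W - 1) * h v v))
      / (h W W - 1)) :
    v ≠ 0 ∧ 0 < sMinus ∧ sMinus < sPlus ∧
    h (v - sMinus • W) (v - sMinus • W) = sMinus ^ 2 ∧
    h (v - sPlus • W) (v - sPlus • W) = sPlus ^ 2 ∧
    (∀ s : ℝ, h (v - s • W) (v - s • W) = s ^ 2 → s = sMinus ∨ s = sPlus) := by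
  have ha : 0 < h W W - 1 := sub_pos.mpr hW
  have hv : v ≠ 0 := by rintro rfl; simp at hvW
  have hD : 0 < (h v W) ^ 2 - (h W W - 1) * h v v := sub_pos.mpr hdisc
  have hsqrt_lt : √((h v W) ^ 2 - (h W W - 1) * h v v) < h v W :=
    Real.sqrt_sq_sub_mul_lt hvW (mul_pos ha (hposdef v hv))
  have hroots (s : ℝ) : h (v - s • W) (v - s • W) = s ^ 2 ↔ s = sMinus ∨ s = sPlus := by
    rw [hsMinus, hsPlus, ← quadratic_eq_zero_iff_of_half_discrim ha.ne'
      (Real.mul_self_sqrt hD.le).symm, LinearMap.BilinForm.apply_sub_smul_self h hsymm]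
    constructor <;> intro hs <;> linear_combination hs
  refine ⟨hv, ?_, ?_, (hroots _).2 (.inl rfl), (hroots _).2 (.inr rfl), fun s => (hroots s).1⟩
  · rw [hsMinus]
    exact div_pos (sub_pos.mpr hsqrt_lt) ha
  · rw [hsMinus, hsPlus]
    exact div_lt_div_of_pos_right (by linarith [Real.sqrt_pos.mpr hD]) ha

/-- Strong wind (`h(W,W) > 1`). If `h(v,W) > 0` and
`h(v,W)² > (h(W,W) − 1)h(v,v)`, then `v ≠ 0` and `h(v − sW, v − sW) = s²` has exactly
two real solutions, both positive, namely `s± = (h(v,W) ± √disc)/(h(W,W) − 1)`; so the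
conic Finsler value `F(v) = sMinus` and the Lorentzian Finsler value `F_l(v) = sPlus` satisfy
`0 < F(v) < F_l(v)`. -/
theorem stmt_10 {V : Type*} [AddCommGroup V] [Module ℝ V] [FiniteDimensional ℝ V]
    (h : V →ₗ[ℝ] V →ₗ[ℝ] ℝ)
    (hsymm : ∀ x y : V, h x y = h y x)
    (hposdef : ∀ x : V, x ≠ 0 → 0 < h x x)
    (W : V) (hW : 1 < h W W)
    (v : V) (hvW : 0 < h v W)
    (hdisc : (h W W - 1) * h v v < (h v W) ^ 2)
    (sMinus sPlus : ℝ)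
    (hsMinus : sMinus = (h v W - Real.sqrt ((h v W) ^ 2 - (h W W - 1) * h v v))
      / (h W W - 1))
    (hsPlus : sPlus = (h v W + Real.sqrt ((h v W) ^ 2 - (h W W - 1) * h v v))
      / (h W W - 1)) :
    v ≠ 0 ∧ 0 < sMinus ∧ sMinus < sPlus ∧
    h (v - sMinus • W) (v - sMinus • W) = sMinus ^ 2 ∧
    h (v - sPlus • W) (v - sPlus • W) = sPlus ^ 2 ∧
    (∀ s : ℝ, h (v - s • W) (v - s • W) = s ^ 2 → s = sMinus ∨ s = sPlus) :=
  stmt_10_general h hsymm hposdef W hW v hvW hdisc sMinus sPlus hsMinus hsPlus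
end
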